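/- Under the local assumptions, let x ∈ B(x*, δ) and set x⁺ = x + d, where d is the LMMSS direction at x (the solution of (J(x)ᵀJ(x) + λ(x)LᵀL)d = −J(x)ᵀF(x) with λ(x) = ‖F(x)‖², taking d = 0 if F(x) = 0). If also x⁺ ∈ B(x*, δ), then dist(x⁺, X*) ≤ c₅·dist(x, X*)², where c₅ = (c₁c₃² + c₄)/c₂ with c₃ = (1/(c₂√γ))·√(c₁² + c₂²(‖L‖² + c_F²)) and c₄ = √(c₁² + c_F²‖L‖²). -/

import Mathlib

/-!
Let `x̄` be a point of `X*` nearest to `x` and `r = ‖x̄ - x‖ = dist(x, X*)`. The step `d`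
minimizes the Tikhonov functional `φ(v) = ‖F(x) + J(x)v‖² + λ‖Lv‖²`, `λ = ‖F(x)‖²`, and the
error bound and the Lipschitz bound squeeze `λ` between `c₂²r²` and `c_F²r²`. Comparing
`φ(d)` with `φ(x̄ - x) ≤ c₁²r⁴ + λ‖L‖²r²` bounds the linearized residual `‖F(x) + J(x)d‖`
by `c₄r²` and `‖Ld‖` by a multiple of `r`; stationarity gives `‖J(x)d‖ ≤ ‖F(x)‖ ≤ c_F r`,
and completeness turns these two into `‖d‖ ≤ c₃r`. Hence
`c₂·dist(x + d, X*) ≤ ‖F(x + d)‖ ≤ c₁‖d‖² + ‖F(x) + J(x)d‖ ≤ (c₁c₃² + c₄)r²`.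
-/

open Matrix Metric

/-- The continuous linear map on Euclidean spaces induced by a real matrix. -/
noncomputable def matCLM {m n : ℕ} (A : Matrix (Fin m) (Fin n) ℝ) :
    EuclideanSpace ℝ (Fin n) →L[ℝ] EuclideanSpace ℝ (Fin m) :=
  LinearMap.toContinuousLinearMap (Matrix.toEuclideanLin A)

/-- `c₃ = (1/(c₂√γ))·√(c₁² + c₂²(nL² + c_F²))`, where `nL = ‖L‖` (spectral norm). -/
noncomputable def lmC3 (c1 c2 cF γ nL : ℝ) : ℝ :=
  (1 / (c2 * Real.sqrt γ)) * Real.sqrt (c1 ^ 2 + c2 ^ 2 * (nL ^ 2 + cF ^ 2))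

/-- `c₄ = √(c₁² + c_F²·nL²)`, where `nL = ‖L‖` (spectral norm). -/
noncomputable def lmC4 (c1 cF nL : ℝ) : ℝ :=
  Real.sqrt (c1 ^ 2 + cF ^ 2 * nL ^ 2)

/-- `c₅ = (c₁c₃² + c₄)/c₂`. -/
noncomputable def lmC5 (c1 c2 cF γ nL : ℝ) : ℝ :=
  (c1 * (lmC3 c1 c2 cF γ nL) ^ 2 + lmC4 c1 cF nL) / c2

open scoped RealInnerProductSpace

section LevenbergMarquardtStep

variable {E V W : Type*} [NormedAddCommGroup E] [InnerProductSpace ℝ E]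
  [NormedAddCommGroup V] [InnerProductSpace ℝ V] [NormedAddCommGroup W] [InnerProductSpace ℝ W]
  {A : E →L[ℝ] V} {B : E →L[ℝ] W} {f : V} {d v : E} {c r c1 c2 cF γ : ℝ}

lemma inner_add_mul_inner_eq_zero_of_normal_eq [CompleteSpace E] [CompleteSpace V]
    [CompleteSpace W]
    (hd : (A.adjoint ∘L A + c • B.adjoint ∘L B) d = -A.adjoint f) (w : E) :
    ⟪f + A d, A w⟫ + c * ⟪B d, B w⟫ = 0 := by
  have h := congrArg (⟪·, w⟫) hd
  simp only [_root_.add_apply, _root_.smul_apply,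
    ContinuousLinearMap.comp_apply, inner_add_left, real_inner_smul_left, inner_neg_left,
    ContinuousLinearMap.adjoint_inner_left] at h
  rw [inner_add_left]
  linarith

lemma sq_norm_add_add_mul_sq_norm_le_of_stationary
    (hd : ∀ w, ⟪f + A d, A w⟫ + c * ⟪B d, B w⟫ = 0) (hc : 0 ≤ c) (u : E) :
    ‖f + A d‖ ^ 2 + c * ‖B d‖ ^ 2 ≤ ‖f + A u‖ ^ 2 + c * ‖B u‖ ^ 2 := by
  have hA : f + A u = (f + A d) + A (u - d) := by rw [map_sub]; abel
  have hB : B u = B d + B (u - d) := by rw [map_sub]; abel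
  rw [hA, hB, norm_add_sq_real (f + A d), norm_add_sq_real (B d)]
  nlinarith [hd (u - d), sq_nonneg ‖A (u - d)‖, mul_nonneg hc (sq_nonneg ‖B (u - d)‖)]

lemma norm_apply_le_of_stationary (hd : ∀ w, ⟪f + A d, A w⟫ + c * ⟪B d, B w⟫ = 0)
    (hc : 0 ≤ c) : ‖A d‖ ≤ ‖f‖ := by
  have h := hd d
  rw [inner_add_left, real_inner_self_eq_norm_sq, real_inner_self_eq_norm_sq] at h
  have hAd : ‖A d‖ ^ 2 ≤ ‖f‖ * ‖A d‖ := by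
    nlinarith [(abs_le.mp (abs_real_inner_le_norm f (A d))).1, mul_nonneg hc (sq_nonneg ‖B d‖)]
  nlinarith [norm_nonneg (A d), norm_nonneg f]

lemma sq_norm_add_add_sq_norm_mul_le (hd : ∀ w, ⟪f + A d, A w⟫ + ‖f‖ ^ 2 * ⟪B d, B w⟫ = 0)
    (hv : ‖v‖ ≤ r) (hfv : ‖f + A v‖ ≤ c1 * r ^ 2) :
    ‖f + A d‖ ^ 2 + ‖f‖ ^ 2 * ‖B d‖ ^ 2 ≤ c1 ^ 2 * r ^ 4 + ‖f‖ ^ 2 * (‖B‖ ^ 2 * r ^ 2) :=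
  calc ‖f + A d‖ ^ 2 + ‖f‖ ^ 2 * ‖B d‖ ^ 2
      ≤ ‖f + A v‖ ^ 2 + ‖f‖ ^ 2 * ‖B v‖ ^ 2 :=
        sq_norm_add_add_mul_sq_norm_le_of_stationary hd (sq_nonneg _) v
    _ ≤ (c1 * r ^ 2) ^ 2 + ‖f‖ ^ 2 * (‖B‖ * r) ^ 2 := by
        gcongr
        exact B.le_opNorm_of_le hv
    _ = c1 ^ 2 * r ^ 4 + ‖f‖ ^ 2 * (‖B‖ ^ 2 * r ^ 2) := by ring

lemma norm_add_apply_le_lmC4 (hd : ∀ w, ⟪f + A d, A w⟫ + ‖f‖ ^ 2 * ⟪B d, B w⟫ = 0)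
    (hv : ‖v‖ ≤ r) (hfv : ‖f + A v‖ ≤ c1 * r ^ 2) (hfF : ‖f‖ ≤ cF * r) :
    ‖f + A d‖ ≤ lmC4 c1 cF ‖B‖ * r ^ 2 := by
  have hf : ‖f‖ ^ 2 ≤ (cF * r) ^ 2 := pow_le_pow_left₀ (norm_nonneg f) hfF 2
  have hc4 : lmC4 c1 cF ‖B‖ ^ 2 = c1 ^ 2 + cF ^ 2 * ‖B‖ ^ 2 :=
    Real.sq_sqrt (by positivity)
  rw [← pow_le_pow_iff_left₀ (norm_nonneg _) (by unfold lmC4; positivity) two_ne_zero, mul_pow, hc4]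
  nlinarith [sq_norm_add_add_sq_norm_mul_le hd hv hfv, mul_nonneg (sq_nonneg ‖f‖) (sq_nonneg ‖B d‖),
    mul_le_mul_of_nonneg_right hf (mul_nonneg (sq_nonneg ‖B‖) (sq_nonneg r))]

lemma norm_le_lmC3_mul (hd : ∀ w, ⟪f + A d, A w⟫ + ‖f‖ ^ 2 * ⟪B d, B w⟫ = 0)
    (hv : ‖v‖ ≤ r) (hfv : ‖f + A v‖ ≤ c1 * r ^ 2) (hc2 : 0 < c2) (hr : 0 < r)
    (hcf : c2 * r ≤ ‖f‖) (hfF : ‖f‖ ≤ cF * r) (hγ : 0 < γ)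
    (hcomp : γ * ‖d‖ ^ 2 ≤ ‖A d‖ ^ 2 + ‖B d‖ ^ 2) :
    ‖d‖ ≤ lmC3 c1 c2 cF γ ‖B‖ * r := by
  have hf : (c2 * r) ^ 2 ≤ ‖f‖ ^ 2 := pow_le_pow_left₀ (by positivity) hcf 2
  have hBd_mul : c2 ^ 2 * r ^ 2 * (‖B d‖ ^ 2 - ‖B‖ ^ 2 * r ^ 2) ≤ c1 ^ 2 * r ^ 2 * r ^ 2 := by
    have := sq_norm_add_add_sq_norm_mul_le hd hv hfv
    rcases le_total 0 (‖B d‖ ^ 2 - ‖B‖ ^ 2 * r ^ 2) with h | h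
    · nlinarith [mul_le_mul_of_nonneg_right hf h]
    · exact (mul_nonpos_of_nonneg_of_nonpos (by positivity) h).trans (by positivity)
  have hAd : ‖A d‖ ^ 2 ≤ (cF * r) ^ 2 :=
    pow_le_pow_left₀ (norm_nonneg _) ((norm_apply_le_of_stationary hd (sq_nonneg _)).trans hfF) 2
  have hc3 : lmC3 c1 c2 cF γ ‖B‖ ^ 2 =
      (c1 ^ 2 + c2 ^ 2 * (‖B‖ ^ 2 + cF ^ 2)) / (c2 ^ 2 * γ) := by
    rw [lmC3, mul_pow, div_pow, one_pow, mul_pow, Real.sq_sqrt hγ.le, Real.sq_sqrt (by positivity)]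
    ring
  rw [← pow_le_pow_iff_left₀ (norm_nonneg _) (by unfold lmC3; positivity) two_ne_zero, mul_pow,
    hc3, div_mul_eq_mul_div, le_div_iff₀ (by positivity)]
  have hBd : c2 ^ 2 * ‖B d‖ ^ 2 ≤ c1 ^ 2 * r ^ 2 + c2 ^ 2 * ‖B‖ ^ 2 * r ^ 2 := by
    nlinarith [pow_pos hr 2]
  nlinarith [mul_le_mul_of_nonneg_left hcomp (sq_nonneg c2)]

lemma norm_map_add_le_of_map_eq_zero {Φ : E → V} {x xb : E} (hxb : Φ xb = 0)
    (hr : 0 < ‖xb - x‖) (hc1 : 0 ≤ c1) (hc2 : 0 < c2) (hγ : 0 < γ)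
    (hd : ∀ w, ⟪Φ x + A d, A w⟫ + ‖Φ x‖ ^ 2 * ⟪B d, B w⟫ = 0)
    (hTxb : ‖A (xb - x) - (Φ xb - Φ x)‖ ≤ c1 * ‖xb - x‖ ^ 2)
    (hTd : ‖A d - (Φ (x + d) - Φ x)‖ ≤ c1 * ‖d‖ ^ 2)
    (hLip : ‖Φ x - Φ xb‖ ≤ cF * ‖x - xb‖) (hEB : c2 * ‖xb - x‖ ≤ ‖Φ x‖)
    (hcomp : γ * ‖d‖ ^ 2 ≤ ‖A d‖ ^ 2 + ‖B d‖ ^ 2) :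
    ‖Φ (x + d)‖ ≤ (c1 * lmC3 c1 c2 cF γ ‖B‖ ^ 2 + lmC4 c1 cF ‖B‖) * ‖xb - x‖ ^ 2 := by
  have hfv : ‖Φ x + A (xb - x)‖ ≤ c1 * ‖xb - x‖ ^ 2 := by
    rwa [hxb, zero_sub, sub_neg_eq_add, add_comm] at hTxb
  have hfF : ‖Φ x‖ ≤ cF * ‖xb - x‖ := by rwa [hxb, sub_zero, norm_sub_rev x] at hLip
  have hres := norm_add_apply_le_lmC4 hd le_rfl hfv hfF
  have hstep := norm_le_lmC3_mul hd le_rfl hfv hc2 hr hEB hfF hγ hcomp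
  calc ‖Φ (x + d)‖
      = ‖(Φ x + A d) - (A d - (Φ (x + d) - Φ x))‖ := by congr 1; abel
    _ ≤ ‖Φ x + A d‖ + ‖A d - (Φ (x + d) - Φ x)‖ := norm_sub_le _ _
    _ ≤ lmC4 c1 cF ‖B‖ * ‖xb - x‖ ^ 2 + c1 * (lmC3 c1 c2 cF γ ‖B‖ * ‖xb - x‖) ^ 2 := by
        gcongr
        exact hTd.trans (by gcongr)
    _ = (c1 * lmC3 c1 c2 cF γ ‖B‖ ^ 2 + lmC4 c1 cF ‖B‖) * ‖xb - x‖ ^ 2 := by ring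

end LevenbergMarquardtStep

section MatrixNormalEquation

variable {m n p : ℕ}

lemma matCLM_add (A B : Matrix (Fin m) (Fin n) ℝ) : matCLM (A + B) = matCLM A + matCLM B := by
  simp [matCLM]

lemma matCLM_smul (c : ℝ) (A : Matrix (Fin m) (Fin n) ℝ) : matCLM (c • A) = c • matCLM A := by
  simp [matCLM]

lemma matCLM_mul (A : Matrix (Fin m) (Fin n) ℝ) (B : Matrix (Fin n) (Fin p) ℝ) :
    matCLM (A * B) = matCLM A ∘L matCLM B := by
  ext1 v
  simp [matCLM]

lemma matCLM_transpose (A : Matrix (Fin m) (Fin n) ℝ) : matCLM Aᵀ = (matCLM A).adjoint := by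
  rw [matCLM, matCLM, ← LinearMap.adjoint_toContinuousLinearMap,
    ← Matrix.toEuclideanLin_conjTranspose_eq_adjoint, conjTranspose_eq_transpose_of_trivial]

lemma inner_add_mul_inner_eq_zero_of_matrix_normal_eq {A : Matrix (Fin m) (Fin n) ℝ}
    {L : Matrix (Fin p) (Fin n) ℝ} {c : ℝ} {f : EuclideanSpace ℝ (Fin m)}
    {d : EuclideanSpace ℝ (Fin n)}
    (hd : matCLM (Aᵀ * A + c • (Lᵀ * L)) d = -(matCLM Aᵀ f)) (w : EuclideanSpace ℝ (Fin n)) :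
    ⟪f + matCLM A d, matCLM A w⟫ + c * ⟪matCLM L d, matCLM L w⟫ = 0 := by
  rw [matCLM_add, matCLM_smul, matCLM_mul, matCLM_mul, matCLM_transpose, matCLM_transpose] at hd
  exact inner_add_mul_inner_eq_zero_of_normal_eq hd w

end MatrixNormalEquation

theorem lmmss_quadratic_decrease_of_distance_general
    (n m p : ℕ)
    (F : EuclideanSpace ℝ (Fin n) → EuclideanSpace ℝ (Fin m))
    (J : EuclideanSpace ℝ (Fin n) → Matrix (Fin m) (Fin n) ℝ)
    (hdiff : ∀ x, HasFDerivAt F (matCLM (J x)) x)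
    (xstar : EuclideanSpace ℝ (Fin n)) (hxstar : F xstar = 0)
    (δ : ℝ)
    (c1 : ℝ) (hc1pos : 0 < c1)
    (hc1 : ∀ x ∈ closedBall xstar (2 * δ), ∀ y ∈ closedBall xstar (2 * δ),
      ‖matCLM (J y) (x - y) - (F x - F y)‖ ≤ c1 * ‖x - y‖ ^ 2)
    (cF : ℝ)
    (hcF : ∀ x ∈ closedBall xstar (2 * δ), ∀ y ∈ closedBall xstar (2 * δ),
      ‖F x - F y‖ ≤ cF * ‖x - y‖)
    (c2 : ℝ) (hc2pos : 0 < c2)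
    (hc2 : ∀ x ∈ closedBall xstar (2 * δ),
      c2 * infDist x {y | F y = 0} ≤ ‖F x‖)
    (L : Matrix (Fin p) (Fin n) ℝ) (γ : ℝ) (hγ : 0 < γ)
    (hcomp : ∀ (x : EuclideanSpace ℝ (Fin n)) (v : EuclideanSpace ℝ (Fin n)),
      ‖matCLM (J x) v‖ ^ 2 + ‖matCLM L v‖ ^ 2 ≥ γ * ‖v‖ ^ 2)
    (x : EuclideanSpace ℝ (Fin n)) (hx : x ∈ closedBall xstar δ)
    (d : EuclideanSpace ℝ (Fin n))
    (hd0 : F x = 0 → d = 0)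
    (hd : F x ≠ 0 →
      matCLM ((J x)ᵀ * J x + ‖F x‖ ^ 2 • (Lᵀ * L)) d = -(matCLM (J x)ᵀ (F x)))
    (hxplus : x + d ∈ closedBall xstar δ) :
    infDist (x + d) {y | F y = 0} ≤
      lmC5 c1 c2 cF γ ‖matCLM L‖ * infDist x {y | F y = 0} ^ 2 := by
  set S := {y | F y = 0}
  by_cases hFx : F x = 0
  · rw [hd0 hFx, add_zero, infDist_zero_of_mem (show x ∈ S from hFx)]
    simp
  have hS : IsClosed S :=
    isClosed_eq (continuous_iff_continuousAt.2 fun z => (hdiff z).continuousAt) continuous_const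
  have hxstarS : xstar ∈ S := hxstar
  have hSne : S.Nonempty := ⟨xstar, hxstarS⟩
  obtain ⟨xb, hxbF, hxb⟩ := hS.exists_infDist_eq_dist hSne x
  have hr : infDist x S = ‖xb - x‖ := by rw [hxb, dist_comm, dist_eq_norm]
  have hr0 : 0 < infDist x S :=
    infDist_nonneg.lt_of_ne' fun h => hFx ((hS.mem_iff_infDist_zero hSne).2 h)
  have hrδ : infDist x S ≤ δ := (infDist_le_dist_of_mem hxstarS).trans (mem_closedBall.1 hx)
  have hx2 : x ∈ closedBall xstar (2 * δ) := closedBall_subset_closedBall (by linarith) hx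
  have hxd2 : x + d ∈ closedBall xstar (2 * δ) := closedBall_subset_closedBall (by linarith) hxplus
  have hxb2 : xb ∈ closedBall xstar (2 * δ) := by
    rw [mem_closedBall]
    linarith [dist_triangle_left xb xstar x, mem_closedBall.1 hx]
  have hFxd := norm_map_add_le_of_map_eq_zero hxbF (hr ▸ hr0) hc1pos.le hc2pos hγ
    (inner_add_mul_inner_eq_zero_of_matrix_normal_eq (hd hFx)) (hc1 xb hxb2 x hx2)
    (by simpa only [add_sub_cancel_left] using hc1 (x + d) hxd2 x hx2) (hcF x hx2 xb hxb2)
    (hr ▸ hc2 x hx2) (hcomp x d)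
  refine le_of_mul_le_mul_left ?_ hc2pos
  calc c2 * infDist (x + d) S ≤ ‖F (x + d)‖ := hc2 (x + d) hxd2
    _ ≤ _ := hFxd
    _ = c2 * (lmC5 c1 c2 cF γ ‖matCLM L‖ * infDist x S ^ 2) := by
        rw [hr, lmC5]
        field_simp

/-- under the local assumptions, a full LMMSS step from `x ∈ B(x*, δ)` to
`x⁺ = x + d` satisfies `dist(x⁺, X*) ≤ c₅ · dist(x, X*)²` provided `x⁺ ∈ B(x*, δ)`. -/
theorem lmmss_quadratic_decrease_of_distance
    (n m p : ℕ)
    (F : EuclideanSpace ℝ (Fin n) → EuclideanSpace ℝ (Fin m))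
    (J : EuclideanSpace ℝ (Fin n) → Matrix (Fin m) (Fin n) ℝ)
    (hdiff : ∀ x, HasFDerivAt F (matCLM (J x)) x)
    (hJcont : Continuous J)
    (hne : ∃ x, F x = 0)
    (xstar : EuclideanSpace ℝ (Fin n)) (hxstar : F xstar = 0)
    (δ : ℝ) (hδ0 : 0 < δ) (hδh : δ < 1 / 2)
    (c1 : ℝ) (hc1pos : 0 < c1)
    (hc1 : ∀ x ∈ closedBall xstar (2 * δ), ∀ y ∈ closedBall xstar (2 * δ),
      ‖matCLM (J y) (x - y) - (F x - F y)‖ ≤ c1 * ‖x - y‖ ^ 2)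
    (cF : ℝ) (hcFpos : 0 < cF)
    (hcF : ∀ x ∈ closedBall xstar (2 * δ), ∀ y ∈ closedBall xstar (2 * δ),
      ‖F x - F y‖ ≤ cF * ‖x - y‖)
    (c2 : ℝ) (hc2pos : 0 < c2)
    (hc2 : ∀ x ∈ closedBall xstar (2 * δ),
      c2 * infDist x {y | F y = 0} ≤ ‖F x‖)
    (L : Matrix (Fin p) (Fin n) ℝ) (γ : ℝ) (hγ : 0 < γ)
    (hcomp : ∀ (x : EuclideanSpace ℝ (Fin n)) (v : EuclideanSpace ℝ (Fin n)),
      ‖matCLM (J x) v‖ ^ 2 + ‖matCLM L v‖ ^ 2 ≥ γ * ‖v‖ ^ 2)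
    (x : EuclideanSpace ℝ (Fin n)) (hx : x ∈ closedBall xstar δ)
    (d : EuclideanSpace ℝ (Fin n))
    (hd0 : F x = 0 → d = 0)
    (hd : F x ≠ 0 →
      matCLM ((J x)ᵀ * J x + ‖F x‖ ^ 2 • (Lᵀ * L)) d = -(matCLM (J x)ᵀ (F x)))
    (hxplus : x + d ∈ closedBall xstar δ) :
    infDist (x + d) {y | F y = 0} ≤
      lmC5 c1 c2 cF γ ‖matCLM L‖ * infDist x {y | F y = 0} ^ 2 :=
  lmmss_quadratic_decrease_of_distance_general n m p F J hdiff xstar hxstar δ c1 hc1pos hc1 cF hcF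
    c2 hc2pos hc2 L γ hγ hcomp x hx d hd0 hd hxplus
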